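/- arXiv:2302.04591 — 9 statements merged into one kernel-verified Lean document; each statement's English description precedes it below -/
import Mathlib

section
/- Every optimal solution of the LP relaxation of formulation (P2) automatically satisfies the ordering constraints on z: if (y, z) ∈ F(P2) and f(y, z) = v(P2), then z^k ≥ z^{k+1} for every k ∈ {1, …, K−1}. -/
open Finset
open scoped Classical

noncomputable section

/-- Radius of a nonempty set `S` of open facilities: the largest, over clients `i`,
of the distance from `i` to the closest facility in `S`. -/
def radius {N M : ℕ} (hN : 0 < N) (d : Fin N → Fin M → ℝ)
    (S : Finset (Fin M)) (hS : S.Nonempty) : ℝ :=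
  (univ : Finset (Fin N)).sup' ⟨⟨0, hN⟩, mem_univ _⟩ fun i => S.inf' hS fun j => d i j

/-- Optimal radius of the `p`-center problem. -/
def opt {N M : ℕ} (hN : 0 < N) (d : Fin N → Fin M → ℝ) (p : ℕ) : ℝ :=
  sInf { r | ∃ S : Finset (Fin M), ∃ hS : S.Nonempty, S.card ≤ p ∧ r = radius hN d S hS }

/-- Objective function `f(y, z) = D^0 + ∑_{k=1}^K (D^k - D^{k-1}) z^k`
(`z` is 0-indexed: entry `k : Fin K` stands for the paper's `z^{k+1}`). -/
def obj {K : ℕ} (D : Fin (K + 1) → ℝ) (z : Fin K → ℝ) : ℝ :=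
  D 0 + ∑ k : Fin K, (D k.succ - D k.castSucc) * z k

/-- Ordering constraints `z^k ≥ z^{k+1}`, `k ∈ {1, …, K-1}` (0-indexed `z`). -/
def Ordered {K : ℕ} (z : Fin K → ℝ) : Prop :=
  ∀ k : Fin K, ∀ h : (k : ℕ) + 1 < K, z ⟨(k : ℕ) + 1, h⟩ ≤ z k

/-- `ActiveIdx d D i k` says that the paper index `κ = k+1` belongs to `S_i ∪ {K}`:
either `κ ≤ K - 1` and some facility `j` satisfies `d i j = D^κ`, or `κ = K`. -/
def ActiveIdx {N M K : ℕ} (d : Fin N → Fin M → ℝ) (D : Fin (K + 1) → ℝ)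
    (i : Fin N) (k : Fin K) : Prop :=
  ((k : ℕ) + 1 < K ∧ ∃ j, d i j = D k.succ) ∨ (k : ℕ) + 1 = K

/-- LP-relaxed feasible set of formulation `(P2)`. -/
def FP2 {N M K : ℕ} (d : Fin N → Fin M → ℝ) (D : Fin (K + 1) → ℝ) (p : ℕ) :
    Set ((Fin M → ℝ) × (Fin K → ℝ)) :=
  { yz | (∀ j, 0 ≤ yz.1 j ∧ yz.1 j ≤ 1) ∧ (∀ k, 0 ≤ yz.2 k ∧ yz.2 k ≤ 1) ∧
    1 ≤ ∑ j, yz.1 j ∧ ∑ j, yz.1 j ≤ (p : ℝ) ∧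
    ∀ i : Fin N, ∀ k : Fin K,
      1 ≤ yz.2 k + ∑ j ∈ univ.filter (fun j => d i j < D k.succ), yz.1 j }

/-- LP-relaxed feasible set of formulation `(CP1)`. -/
def FCP1 {N M K : ℕ} (d : Fin N → Fin M → ℝ) (D : Fin (K + 1) → ℝ) (p : ℕ) :
    Set ((Fin M → ℝ) × (Fin K → ℝ)) :=
  { yz | (∀ j, 0 ≤ yz.1 j ∧ yz.1 j ≤ 1) ∧ (∀ k, 0 ≤ yz.2 k ∧ yz.2 k ≤ 1) ∧
    1 ≤ ∑ j, yz.1 j ∧ ∑ j, yz.1 j ≤ (p : ℝ) ∧ Ordered yz.2 ∧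
    ∀ i : Fin N, ∀ k : Fin K, ActiveIdx d D i k →
      1 ≤ yz.2 k + ∑ j ∈ univ.filter (fun j => d i j < D k.succ), yz.1 j }

/-- Integer feasible solutions of formulation `(CP1)`. -/
def CP1Int {N M K : ℕ} (d : Fin N → Fin M → ℝ) (D : Fin (K + 1) → ℝ) (p : ℕ) :
    Set ((Fin M → ℝ) × (Fin K → ℝ)) :=
  { yz | (∀ j, yz.1 j = 0 ∨ yz.1 j = 1) ∧ (∀ k, yz.2 k = 0 ∨ yz.2 k = 1) ∧
    1 ≤ ∑ j, yz.1 j ∧ ∑ j, yz.1 j ≤ (p : ℝ) ∧ Ordered yz.2 ∧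
    ∀ i : Fin N, ∀ k : Fin K, ActiveIdx d D i k →
      1 ≤ yz.2 k + ∑ j ∈ univ.filter (fun j => d i j < D k.succ), yz.1 j }

/-- LP-relaxed feasible set of formulation `(CP2)`. -/
def FCP2 {N M K : ℕ} (d : Fin N → Fin M → ℝ) (D : Fin (K + 1) → ℝ) (p : ℕ) :
    Set ((Fin M → ℝ) × ℝ) :=
  { yr | (∀ j, 0 ≤ yr.1 j ∧ yr.1 j ≤ 1) ∧ 0 ≤ yr.2 ∧ yr.2 ≤ (K : ℝ) ∧
    1 ≤ ∑ j, yr.1 j ∧ ∑ j, yr.1 j ≤ (p : ℝ) ∧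
    ∀ i : Fin N, ∀ k : Fin K, ActiveIdx d D i k →
      ((k : ℕ) + 1 : ℝ) ≤ yr.2 +
        ((k : ℕ) + 1 : ℝ) * ∑ j ∈ univ.filter (fun j => d i j < D k.succ), yr.1 j }

/-- Integer feasible solutions of formulation `(CP2)`. -/
def CP2Int {N M K : ℕ} (d : Fin N → Fin M → ℝ) (D : Fin (K + 1) → ℝ) (p : ℕ)
    (y : Fin M → ℝ) (r : ℤ) : Prop :=
  (∀ j, y j = 0 ∨ y j = 1) ∧ 0 ≤ r ∧ r ≤ (K : ℤ) ∧
    1 ≤ ∑ j, y j ∧ ∑ j, y j ≤ (p : ℝ) ∧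
    ∀ i : Fin N, ∀ k : Fin K, ActiveIdx d D i k →
      ((k : ℕ) + 1 : ℝ) ≤ (r : ℝ) +
        ((k : ℕ) + 1 : ℝ) * ∑ j ∈ univ.filter (fun j => d i j < D k.succ), y j

/-! Lowering `z^{k'}` to `z^k` for `k < k'` keeps a point of `F(P2)` feasible, because the
covering sets `{j | d i j < D^k}` grow with `k`, and it changes the objective by
`(D^{k'} - D^{k'-1}) (z^k - z^{k'})`. At an optimum this cannot be negative, so `z` is
antitone. -/

open Function

section

variable {N M K : ℕ} {d : Fin N → Fin M → ℝ} {D : Fin (K + 1) → ℝ} {p : ℕ}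

lemma obj_update (z : Fin K → ℝ) (k : Fin K) (c : ℝ) :
    obj D (update z k c) = obj D z + (D k.succ - D k.castSucc) * (c - z k) := by
  have hdiff : ∑ m : Fin K, ((D m.succ - D m.castSucc) * update z k c m
      - (D m.succ - D m.castSucc) * z m) = (D k.succ - D k.castSucc) * (c - z k) := by
    rw [sum_eq_single k (fun m _ hm => by simp [update_of_ne hm]) (by simp)]
    simp only [update_self]
    ring
  rw [sum_sub_distrib] at hdiff
  unfold obj
  linarith

lemma le_obj_of_nonneg (hD : Monotone D) {z : Fin K → ℝ} (hz : ∀ k, 0 ≤ z k) :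
    D 0 ≤ obj D z := by
  have : 0 ≤ ∑ k : Fin K, (D k.succ - D k.castSucc) * z k :=
    sum_nonneg fun k _ =>
      mul_nonneg (sub_nonneg.2 (hD Fin.castSucc_lt_succ.le)) (hz k)
  unfold obj
  linarith

lemma bddBelow_obj_FP2 (hD : Monotone D) :
    BddBelow { v | ∃ yz ∈ FP2 d D p, v = obj D yz.2 } := by
  refine ⟨D 0, ?_⟩
  rintro v ⟨yz, hyz, rfl⟩
  exact le_obj_of_nonneg hD fun k => (hyz.2.1 k).1

lemma update_mem_FP2_of_le (hD : Monotone D) {y : Fin M → ℝ} {z : Fin K → ℝ}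
    (h : (y, z) ∈ FP2 d D p) {k l : Fin K} (hkl : k ≤ l) :
    (y, update z l (z k)) ∈ FP2 d D p := by
  obtain ⟨hy, hz, hs1, hsp, hcov⟩ := h
  refine ⟨hy, fun m => ?_, hs1, hsp, fun i m => ?_⟩
  · rcases eq_or_ne m l with rfl | hm
    · simpa only [update_self] using hz k
    · simpa only [update_of_ne hm] using hz m
  · rcases eq_or_ne m l with rfl | hm
    · have hsub : univ.filter (fun j => d i j < D k.succ) ⊆
          univ.filter (fun j => d i j < D m.succ) := by
        intro j
        simp only [mem_filter, mem_univ, true_and]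
        exact fun hj => hj.trans_le (hD (Fin.succ_le_succ_iff.2 hkl))
      have hsum := sum_le_sum_of_subset_of_nonneg hsub fun j _ _ => (hy j).1
      simp only [update_self]
      linarith [hcov i k]
    · simpa only [update_of_ne hm] using hcov i m

theorem antitone_of_obj_eq_sInf_FP2 (hD : StrictMono D) {y : Fin M → ℝ} {z : Fin K → ℝ}
    (hfeas : (y, z) ∈ FP2 d D p)
    (hopt : obj D z = sInf { v | ∃ yz ∈ FP2 d D p, v = obj D yz.2 }) :
    Antitone z := by
  intro k l hkl
  by_contra! hlt
  have hmem : obj D (update z l (z k)) ∈ { v | ∃ yz ∈ FP2 d D p, v = obj D yz.2 } :=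
    ⟨_, update_mem_FP2_of_le hD.monotone hfeas hkl, rfl⟩
  have hle := hopt ▸ csInf_le (bddBelow_obj_FP2 hD.monotone) hmem
  have hstep : 0 < D l.succ - D l.castSucc := sub_pos.2 (hD Fin.castSucc_lt_succ)
  rw [obj_update] at hle
  linarith [mul_neg_of_pos_of_neg hstep (sub_neg.2 hlt)]

end

theorem stmt0_general {N M K : ℕ}
    (d : Fin N → Fin M → ℝ) (p : ℕ)
    (D : Fin (K + 1) → ℝ) (hD : StrictMono D)
    (y : Fin M → ℝ) (z : Fin K → ℝ)
    (hfeas : (y, z) ∈ FP2 d D p)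
    (hopt : obj D z = sInf { v | ∃ yz ∈ FP2 d D p, v = obj D yz.2 }) :
    Ordered z :=
  fun _ _ => antitone_of_obj_eq_sInf_FP2 hD hfeas hopt (Nat.le_succ _)

/-- every optimal solution of the LP relaxation of `(P2)` automatically
satisfies the ordering constraints `z^k ≥ z^{k+1}`. -/
theorem stmt0 {N M K : ℕ} (hN : 0 < N) (hM : 0 < M)
    (d : Fin N → Fin M → ℝ) (p : ℕ) (hp1 : 1 ≤ p) (hpM : p ≤ M)
    (D : Fin (K + 1) → ℝ) (hD : StrictMono D)
    (hrange : Set.range D = { x : ℝ | ∃ i j, d i j = x })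
    (y : Fin M → ℝ) (z : Fin K → ℝ)
    (hfeas : (y, z) ∈ FP2 d D p)
    (hopt : obj D z = sInf { v | ∃ yz ∈ FP2 d D p, v = obj D yz.2 }) :
    Ordered z :=
  stmt0_general d p D hD y z hfeas hopt
end
end

section
/- Adding the ordering constraints z^k ≥ z^{k+1} (k = 1, …, K−1) to the LP relaxation of (P2) does not change its optimal value: v(P2′) = v(P2), where v(P2′) is the infimum of f over F(P2′) = F(P2) ∩ { (y, z) : z^k ≥ z^{k+1} for all k ∈ {1,…,K−1} }. -/
open Finset
open scoped Classical

noncomputable section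

lemma obj_ge {K : ℕ} (D : Fin (K + 1) → ℝ) (hD : StrictMono D)
    (z : Fin K → ℝ) (hz : ∀ k, 0 ≤ z k) : D 0 ≤ obj D z := by
  unfold obj
  have : (0:ℝ) ≤ ∑ k : Fin K, (D k.succ - D k.castSucc) * z k := by
    apply Finset.sum_nonneg
    intro k _
    have : D k.castSucc ≤ D k.succ := hD.le_iff_le.mpr (by
      simp [Fin.le_def])
    exact mul_nonneg (by linarith) (hz k)
  linarith

lemma obj_mono {K : ℕ} (D : Fin (K + 1) → ℝ) (hD : StrictMono D)
    {z z' : Fin K → ℝ} (h : ∀ k, z' k ≤ z k) : obj D z' ≤ obj D z := by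
  unfold obj
  have : ∑ k : Fin K, (D k.succ - D k.castSucc) * z' k ≤
      ∑ k : Fin K, (D k.succ - D k.castSucc) * z k := by
    apply Finset.sum_le_sum
    intro k _
    have hc : D k.castSucc ≤ D k.succ := hD.le_iff_le.mpr (by simp [Fin.le_def])
    exact mul_le_mul_of_nonneg_left (h k) (by linarith)
  linarith

/-- Key reordering lemma: any feasible point can be replaced by an ordered one
with no larger objective. -/
lemma reorder {N M K : ℕ} (hN : 0 < N)
    (d : Fin N → Fin M → ℝ) (p : ℕ)
    (D : Fin (K + 1) → ℝ) (hD : StrictMono D)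
    (yz : (Fin M → ℝ) × (Fin K → ℝ)) (hyz : yz ∈ FP2 d D p) :
    ∃ yz' ∈ FP2 d D p, Ordered yz'.2 ∧ obj D yz'.2 ≤ obj D yz.2 := by
  obtain ⟨hy, hz, hs1, hsp, hcon⟩ := hyz
  set i0 : Fin N := ⟨0, hN⟩
  set z' : Fin K → ℝ := fun k =>
    max 0 ((univ : Finset (Fin N)).sup' ⟨i0, mem_univ _⟩
      fun i => 1 - ∑ j ∈ univ.filter (fun j => d i j < D k.succ), yz.1 j) with hz'
  have hsum_nonneg : ∀ (i : Fin N) (k : Fin K),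
      (0:ℝ) ≤ ∑ j ∈ univ.filter (fun j => d i j < D k.succ), yz.1 j := by
    intro i k
    exact Finset.sum_nonneg fun j _ => (hy j).1
  have hz'le : ∀ k, z' k ≤ yz.2 k := by
    intro k
    apply max_le (hz k).1
    apply Finset.sup'_le
    intro i _
    have := hcon i k
    linarith
  have hz'01 : ∀ k, 0 ≤ z' k ∧ z' k ≤ 1 := by
    intro k
    refine ⟨le_max_left _ _, max_le zero_le_one ?_⟩
    apply Finset.sup'_le
    intro i _
    have := hsum_nonneg i k
    linarith
  have hmono : ∀ (i : Fin N) (k k' : Fin K), (k:ℕ) ≤ (k':ℕ) →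
      (∑ j ∈ univ.filter (fun j => d i j < D k.succ), yz.1 j) ≤
      ∑ j ∈ univ.filter (fun j => d i j < D k'.succ), yz.1 j := by
    intro i k k' hkk'
    apply Finset.sum_le_sum_of_subset_of_nonneg
    · intro j hj
      simp only [mem_filter, mem_univ, true_and] at hj ⊢
      have : D k.succ ≤ D k'.succ := hD.le_iff_le.mpr (by
        simp [Fin.le_def, Nat.succ_le_succ hkk'])
      linarith
    · intro j _ _; exact (hy j).1
  refine ⟨(yz.1, z'), ⟨hy, hz'01, hs1, hsp, ?_⟩, ?_, obj_mono D hD hz'le⟩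
  · intro i k
    have h1 : 1 - ∑ j ∈ univ.filter (fun j => d i j < D k.succ), yz.1 j ≤ z' k :=
      le_trans (Finset.le_sup'
        (fun i => 1 - ∑ j ∈ univ.filter (fun j => d i j < D k.succ), yz.1 j)
        (mem_univ i)) (le_max_right _ _)
    simp only
    linarith
  · intro k h
    simp only
    apply max_le (hz'01 k).1
    apply Finset.sup'_le
    intro i _
    refine le_trans ?_ (le_max_right 0 _)
    refine le_trans ?_ (Finset.le_sup' _ (mem_univ i))
    have := hmono i k ⟨(k:ℕ)+1, h⟩ (by simp)
    linarith

/-- adding the ordering constraints to the LP relaxation of `(P2)`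
does not change its optimal value: `v(P2') = v(P2)`. -/
theorem stmt1 {N M K : ℕ} (hN : 0 < N) (hM : 0 < M)
    (d : Fin N → Fin M → ℝ) (p : ℕ) (hp1 : 1 ≤ p) (hpM : p ≤ M)
    (D : Fin (K + 1) → ℝ) (hD : StrictMono D)
    (hrange : Set.range D = { x : ℝ | ∃ i j, d i j = x }) :
    sInf { v | ∃ yz ∈ FP2 d D p, Ordered yz.2 ∧ v = obj D yz.2 } =
      sInf { v | ∃ yz ∈ FP2 d D p, v = obj D yz.2 } := by
  set A := { v | ∃ yz ∈ FP2 d D p, Ordered yz.2 ∧ v = obj D yz.2 }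
  set B := { v | ∃ yz ∈ FP2 d D p, v = obj D yz.2 }
  have hAB : A ⊆ B := by rintro v ⟨yz, hyz, _, hv⟩; exact ⟨yz, hyz, hv⟩
  -- a concrete feasible ordered point
  have hAne : A.Nonempty := by
    set j0 : Fin M := ⟨0, hM⟩
    set y0 : Fin M → ℝ := fun j => if j = j0 then 1 else 0
    have hsum : ∑ j, y0 j = 1 := by simp [y0]
    refine ⟨obj D (fun _ => 1), (y0, fun _ => 1), ⟨?_, ?_, ?_, ?_, ?_⟩, ?_, rfl⟩
    · intro j; by_cases h : j = j0 <;> simp [y0, h]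
    · intro k; norm_num
    · rw [hsum]
    · rw [hsum]; exact_mod_cast hp1
    · intro i k
      have := Finset.sum_nonneg (s := univ.filter fun j => d i j < D k.succ)
        (f := y0) (fun j _ => by by_cases h : j = j0 <;> simp [y0, h])
      simp only; linarith
    · intro k h; exact le_refl _
  have hBne : B.Nonempty := hAne.mono hAB
  have hBbd : BddBelow B := by
    refine ⟨D 0, ?_⟩
    rintro v ⟨yz, hyz, rfl⟩
    exact obj_ge D hD yz.2 fun k => (hyz.2.1 k).1
  have hAbd : BddBelow A := hBbd.mono hAB
  apply le_antisymm
  · apply le_csInf hBne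
    rintro v ⟨yz, hyz, rfl⟩
    obtain ⟨yz', hyz', hord, hle⟩ := reorder hN d p D hD yz hyz
    exact le_trans (csInf_le hAbd ⟨yz', hyz', hord, rfl⟩) hle
  · exact csInf_le_csInf hBbd hAne hAB
end
end

section
/- Constraint domination under the ordering constraints: let i be a client and k ∈ {1, …, K−1} an index such that no facility j satisfies d i j = D^k. Then for any y : Fin M → ℝ with y_j ≥ 0 for all j and any z : Fin K → ℝ with z^k ≥ z^{k+1}, the inequality z^{k+1} + Σ_{j : d i j < D^{k+1}} y_j ≥ 1 implies the inequality z^k + Σ_{j : d i j < D^k} y_j ≥ 1. -/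
open Finset
open scoped Classical

noncomputable section

/-- constraint domination under the ordering constraints. -/
theorem stmt2 {N M K : ℕ} (hN : 0 < N) (hM : 0 < M)
    (d : Fin N → Fin M → ℝ) (p : ℕ) (hp1 : 1 ≤ p) (hpM : p ≤ M)
    (D : Fin (K + 1) → ℝ) (hD : StrictMono D)
    (hrange : Set.range D = { x : ℝ | ∃ i j, d i j = x })
    (i : Fin N) (k : Fin K) (hk : (k : ℕ) + 1 < K)
    (hnone : ¬ ∃ j, d i j = D k.succ)
    (y : Fin M → ℝ) (hy : ∀ j, 0 ≤ y j)
    (z : Fin K → ℝ) (hz : z ⟨(k : ℕ) + 1, hk⟩ ≤ z k)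
    (hineq : 1 ≤ z ⟨(k : ℕ) + 1, hk⟩ +
      ∑ j ∈ univ.filter (fun j => d i j < D ⟨(k : ℕ) + 2, Nat.succ_lt_succ hk⟩), y j) :
    1 ≤ z k + ∑ j ∈ univ.filter (fun j => d i j < D k.succ), y j := by
  have hsets : (univ.filter (fun j => d i j < D ⟨(k : ℕ) + 2, Nat.succ_lt_succ hk⟩)) =
      univ.filter (fun j => d i j < D k.succ) := by
    ext j
    simp only [mem_filter, mem_univ, true_and]
    constructor
    · intro hlt
      have hmem : d i j ∈ Set.range D := by
        rw [hrange]; exact ⟨i, j, rfl⟩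
      obtain ⟨m, hm⟩ := hmem
      have hmlt : m < (⟨(k : ℕ) + 2, Nat.succ_lt_succ hk⟩ : Fin (K + 1)) := by
        exact hD.lt_iff_lt.mp (by rw [hm]; exact hlt)
      have hmne : m ≠ k.succ := fun h => hnone ⟨j, by rw [← hm, h]⟩
      have : m < k.succ := by
        have h1 : (m : ℕ) < (k : ℕ) + 2 := hmlt
        have h2 : (m : ℕ) ≠ (k : ℕ) + 1 := by
          intro h
          exact hmne (Fin.ext (by simp [Fin.val_succ, h]))
        have : (m : ℕ) < (k : ℕ) + 1 := lt_of_le_of_ne (Nat.lt_succ_iff.mp h1) h2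
        exact (Fin.lt_def).mpr (by simpa [Fin.val_succ])
      rw [← hm]
      exact hD this
    · intro hlt
      refine hlt.trans (hD ?_)
      exact (Fin.lt_def).mpr (by simp [Fin.val_succ])
  rw [hsets] at hineq
  linarith
end
end

section
/- Formulation (CP1) is a valid formulation of the p-center problem: the minimum of f(y, z) = D^0 + Σ_{k=1}^K (D^k − D^{k−1}) z^k over all integer feasible solutions (y, z) of (CP1) equals the optimal radius opt(d, p). -/
open Finset
open scoped Classical

noncomputable section

/-! A feasible `(y, z)` opens `S = {j | y j = 1}`. If a client's closest open facility is at
distance `D^κ`, then `κ ∈ S_i ∪ {K}` and no open facility is strictly closer, so the covering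
constraint at `κ` forces `z^κ = 1`, hence `z^1 = ⋯ = z^κ = 1` by the ordering constraints, and
the telescoping objective is at least `D^κ`; so `R(S) ≤ f(y, z)`. Conversely, a set `S` with
`R(S) = D^t` yields the feasible solution `y = 1_S`, `z^k = [k ≤ t]`, whose objective telescopes
to exactly `D^t`. Hence every radius is an objective value and every objective value dominates a
radius, so the two infima agree. -/

variable {N M K : ℕ}

theorem ordered_iff_antitone {z : Fin K → ℝ} : Ordered z ↔ Antitone z := by
  cases K with
  | zero => exact iff_of_true (fun k => k.elim0) (fun k => k.elim0)
  | succ K =>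
    rw [Fin.antitone_iff_succ_le]
    exact ⟨fun hz i => hz i.castSucc (by simp), fun hz k hk => hz ⟨k, by omega⟩⟩

/-- The 0/1 vector with `z^κ = 1` exactly for `κ ≤ t`, in the paper's 1-based indexing. -/
def step (t : Fin (K + 1)) : Fin K → ℝ := fun k => if k.castSucc < t then 1 else 0

theorem step_antitone (t : Fin (K + 1)) : Antitone (step t) := by
  intro a b hab
  unfold step
  split_ifs with hb ha <;> norm_num
  exact ha ((Fin.castSucc_le_castSucc_iff.mpr hab).trans_lt hb)

theorem obj_mono_s3 {D : Fin (K + 1) → ℝ} (hD : Monotone D) : Monotone (obj D) := by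
  intro z w hzw
  unfold obj
  gcongr with k
  · exact sub_nonneg.mpr (hD Fin.castSucc_lt_succ.le)
  · exact hzw k

theorem obj_step (D : Fin (K + 1) → ℝ) (t : Fin (K + 1)) : obj D (step t) = D t := by
  induction t using Fin.induction with
  | zero => simp [obj, step]
  | succ i ih =>
    have hstep : ∀ k, step i.succ k = step i.castSucc k + if k = i then 1 else 0 := by
      intro k
      simp only [step, Fin.castSucc_lt_succ_iff, Fin.castSucc_lt_castSucc_iff]
      rcases lt_trichotomy k i with h | rfl | h
      · simp [h.le, h, h.ne]
      · simp
      · simp [h.not_ge, h.not_gt, h.ne']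
    simp only [obj] at ih ⊢
    simp only [hstep, mul_add, sum_add_distrib, mul_ite, mul_one, mul_zero, sum_ite_eq',
      mem_univ, if_true]
    linarith

theorem le_obj {D : Fin (K + 1) → ℝ} (hD : Monotone D) {z : Fin K → ℝ} (t : Fin (K + 1))
    (hz0 : ∀ k, 0 ≤ z k) (hz1 : ∀ k, k.castSucc < t → 1 ≤ z k) : D t ≤ obj D z := by
  rw [← obj_step D t]
  refine obj_mono_s3 hD fun k => ?_
  unfold step
  split_ifs with hk
  exacts [hz1 k hk, hz0 k]

theorem nonneg_of_eq_zero_or_eq_one {x : ℝ} (h : x = 0 ∨ x = 1) : 0 ≤ x := by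
  rcases h with rfl | rfl <;> norm_num

theorem sum_eq_card_filter_of_binary {ι : Type*} [Fintype ι] {y : ι → ℝ}
    (hy : ∀ j, y j = 0 ∨ y j = 1) : ∑ j, y j = #(univ.filter fun j => y j = 1) := by
  rw [← sum_boole]
  refine sum_congr rfl fun j _ => ?_
  rcases hy j with h | h <;> simp [h]

theorem radius_le_iff (hN : 0 < N) (d : Fin N → Fin M → ℝ) {S : Finset (Fin M)}
    (hS : S.Nonempty) {r : ℝ} : radius hN d S hS ≤ r ↔ ∀ i, ∃ j ∈ S, d i j ≤ r := by
  refine (Finset.sup'_le_iff _ _).trans ?_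
  simp only [mem_univ, true_implies, inf'_le_iff]

theorem exists_eq_radius (hN : 0 < N) {d : Fin N → Fin M → ℝ} {D : Fin (K + 1) → ℝ}
    (hrange : Set.range D = { x : ℝ | ∃ i j, d i j = x }) {S : Finset (Fin M)}
    (hS : S.Nonempty) : ∃ t, D t = radius hN d S hS := by
  obtain ⟨i, -, hi⟩ := exists_mem_eq_sup' ⟨⟨0, hN⟩, mem_univ _⟩ fun i => S.inf' hS fun j => d i j
  obtain ⟨j, -, hj⟩ := exists_mem_eq_inf' hS fun j => d i j
  obtain ⟨t, ht⟩ : d i j ∈ Set.range D := hrange ▸ ⟨i, j, rfl⟩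
  exact ⟨t, by rw [ht, radius, hi, hj]⟩

theorem exists_radius_le_obj (hN : 0 < N) {d : Fin N → Fin M → ℝ} {D : Fin (K + 1) → ℝ}
    (hD : Monotone D) (hrange : Set.range D = { x : ℝ | ∃ i j, d i j = x }) {p : ℕ}
    {yz : (Fin M → ℝ) × (Fin K → ℝ)} (h : yz ∈ CP1Int d D p) :
    ∃ S : Finset (Fin M), ∃ hS : S.Nonempty, #S ≤ p ∧ radius hN d S hS ≤ obj D yz.2 := by
  obtain ⟨y, z⟩ := yz
  obtain ⟨hy, hz, hsum_ge, hsum_le, hord, hcover⟩ := h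
  dsimp only at hy hz hsum_ge hsum_le hord hcover ⊢
  set S := univ.filter fun j => y j = 1
  have hsum : ∑ j, y j = #S := sum_eq_card_filter_of_binary hy
  rw [hsum] at hsum_ge hsum_le
  have hS : S.Nonempty := card_pos.mp (by exact_mod_cast hsum_ge)
  refine ⟨S, hS, by exact_mod_cast hsum_le, (radius_le_iff hN d hS).mpr fun i => ?_⟩
  obtain ⟨j₀, hj₀S, hj₀min⟩ := S.exists_min_image (d i) hS
  obtain ⟨κ, hκ⟩ : d i j₀ ∈ Set.range D := hrange ▸ ⟨i, j₀, rfl⟩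
  refine ⟨j₀, hj₀S, hκ ▸ le_obj hD κ (fun k => nonneg_of_eq_zero_or_eq_one (hz k)) fun k hk => ?_⟩
  obtain ⟨m, rfl⟩ := Fin.exists_succ_eq.mpr (Fin.ne_zero_of_lt hk)
  -- `j₀` is a closest open facility, so the `y`-part of the covering constraint at `(i, m)` vanishes.
  have hfar : ∀ j ∈ univ.filter (fun j => d i j < D m.succ), y j = 0 := fun j hj =>
    (hy j).resolve_right fun hj1 =>
      (hj₀min j (mem_filter.mpr ⟨mem_univ j, hj1⟩)).not_gt (hκ ▸ (mem_filter.mp hj).2)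
  have hactive : ActiveIdx d D i m := by
    have := m.isLt
    exact (show (m : ℕ) + 1 < K ∨ (m : ℕ) + 1 = K by omega).imp_left fun h => ⟨h, j₀, hκ.symm⟩
  have hzm : 1 ≤ z m := by simpa [sum_eq_zero hfar] using hcover i m hactive
  exact hzm.trans (ordered_iff_antitone.mp hord (Fin.castSucc_lt_succ_iff.mp hk))

theorem exists_mem_CP1Int_obj_eq_radius (hN : 0 < N) {d : Fin N → Fin M → ℝ}
    {D : Fin (K + 1) → ℝ} (hD : StrictMono D)
    (hrange : Set.range D = { x : ℝ | ∃ i j, d i j = x }) {p : ℕ} {S : Finset (Fin M)}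
    (hS : S.Nonempty) (hcard : #S ≤ p) :
    ∃ yz ∈ CP1Int d D p, obj D yz.2 = radius hN d S hS := by
  obtain ⟨t, ht⟩ := exists_eq_radius hN hrange hS
  set y : Fin M → ℝ := fun j => if j ∈ S then 1 else 0
  have hy : ∀ j, y j = 0 ∨ y j = 1 := fun j => by by_cases hj : j ∈ S <;> simp [y, hj]
  have hy0 : ∀ j, 0 ≤ y j := fun j => nonneg_of_eq_zero_or_eq_one (hy j)
  have hsum : ∑ j, y j = #S := by simp [y]
  have hcover : ∀ i k, 1 ≤ step t k + ∑ j ∈ univ.filter (fun j => d i j < D k.succ), y j := by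
    intro i k
    by_cases hk : k.castSucc < t
    · simp only [step, if_pos hk]
      linarith [sum_nonneg fun j (_ : j ∈ univ.filter (fun j => d i j < D k.succ)) => hy0 j]
    · obtain ⟨j, hjS, hj⟩ := (radius_le_iff hN d hS).mp le_rfl i
      have hlt : d i j < D k.succ :=
        calc d i j ≤ D t := ht ▸ hj
          _ < D k.succ := hD ((not_lt.mp hk).trans_lt Fin.castSucc_lt_succ)
      have hj1 : y j ≤ ∑ j ∈ univ.filter (fun j => d i j < D k.succ), y j :=
        single_le_sum (fun j _ => hy0 j) (mem_filter.mpr ⟨mem_univ j, hlt⟩)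
      simp only [step, if_neg hk, y, if_pos hjS] at hj1 ⊢
      linarith
  refine ⟨(y, step t), ⟨hy, fun k => ?_, ?_, ?_, ?_, fun i k _ => hcover i k⟩, ?_⟩
  · by_cases hk : k.castSucc < t <;> simp [step, hk]
  · simpa [hsum] using hS.card_pos
  · simpa [hsum] using hcard
  · exact ordered_iff_antitone.mpr (step_antitone t)
  · exact (obj_step D t).trans ht

theorem stmt3_general {N M K : ℕ} (hN : 0 < N) (hM : 0 < M)
    (d : Fin N → Fin M → ℝ) (p : ℕ) (hp1 : 1 ≤ p)
    (D : Fin (K + 1) → ℝ) (hD : StrictMono D)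
    (hrange : Set.range D = { x : ℝ | ∃ i j, d i j = x }) :
    sInf { v | ∃ yz ∈ CP1Int d D p, v = obj D yz.2 } = opt hN d p := by
  rw [opt]
  set A := { v | ∃ yz ∈ CP1Int d D p, v = obj D yz.2 }
  set B := { r | ∃ S : Finset (Fin M), ∃ hS : S.Nonempty, S.card ≤ p ∧ r = radius hN d S hS }
  have hBA : B ⊆ A := by
    rintro _ ⟨S, hS, hcard, rfl⟩
    obtain ⟨yz, hyz, hobj⟩ := exists_mem_CP1Int_obj_eq_radius hN hD hrange hS hcard
    exact ⟨yz, hyz, hobj.symm⟩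
  have hB : B.Nonempty := ⟨_, {⟨0, hM⟩}, singleton_nonempty _, by simpa using hp1, rfl⟩
  have hA : BddBelow A := by
    refine ⟨D 0, ?_⟩
    rintro _ ⟨⟨y, z⟩, hyz, rfl⟩
    exact le_obj hD.monotone 0 (fun k => nonneg_of_eq_zero_or_eq_one (hyz.2.1 k)) nofun
  refine le_antisymm (csInf_le_csInf hA hB hBA) (le_csInf (hB.mono hBA) ?_)
  rintro _ ⟨yz, hyz, rfl⟩
  obtain ⟨S, hS, hcard, hle⟩ := exists_radius_le_obj hN hD.monotone hrange hyz
  exact (csInf_le (hA.mono hBA) ⟨S, hS, hcard, rfl⟩).trans hle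

/-- `(CP1)` is a valid formulation of the `p`-center problem. -/
theorem stmt3 {N M K : ℕ} (hN : 0 < N) (hM : 0 < M)
    (d : Fin N → Fin M → ℝ) (p : ℕ) (hp1 : 1 ≤ p) (hpM : p ≤ M)
    (D : Fin (K + 1) → ℝ) (hD : StrictMono D)
    (hrange : Set.range D = { x : ℝ | ∃ i j, d i j = x }) :
    sInf { v | ∃ yz ∈ CP1Int d D p, v = obj D yz.2 } = opt hN d p :=
  stmt3_general hN hM d p hp1 D hD hrange
end
end

section
/- If (y, r) is an integer feasible solution of (CP2), then (y, z) with z^k = 1 if r ≥ k and z^k = 0 otherwise (for k = 1,…,K) is an integer feasible solution of (CP1). -/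
open Finset
open scoped Classical

noncomputable section

/-- from an integer feasible solution `(y, r)` of `(CP2)` to an
integer feasible solution `(y, z)` of `(CP1)` with `z^k = 1` iff `r ≥ k`. -/
theorem stmt7 {N M K : ℕ} (hN : 0 < N) (hM : 0 < M)
    (d : Fin N → Fin M → ℝ) (p : ℕ) (hp1 : 1 ≤ p) (hpM : p ≤ M)
    (D : Fin (K + 1) → ℝ) (hD : StrictMono D)
    (hrange : Set.range D = { x : ℝ | ∃ i j, d i j = x })
    (y : Fin M → ℝ) (r : ℤ) (hfeas : CP2Int d D p y r) :
    (y, fun k : Fin K => if ((k : ℕ) : ℤ) + 1 ≤ r then (1 : ℝ) else 0) ∈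
      CP1Int d D p := by
  obtain ⟨hy01, hr0, hrK, hs1, hsp, hcons⟩ := hfeas
  refine ⟨hy01, fun k => by dsimp; split <;> simp, hs1, hsp, ?_, ?_⟩
  · intro k h
    dsimp
    split_ifs with h1 h2
    · norm_num
    · exfalso; push_cast at h1; omega
    · norm_num
    · norm_num
  · intro i k hact
    have h := hcons i k hact
    dsimp
    split_ifs with h1
    · have : 0 ≤ ∑ j ∈ univ.filter (fun j => d i j < D k.succ), y j := by
        apply Finset.sum_nonneg; intro j _
        rcases hy01 j with h | h <;> simp [h]
      linarith
    · push_neg at h1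
      have hrk : (r : ℝ) ≤ (k : ℕ) := by exact_mod_cast (by omega : r ≤ (k : ℕ))
      set S := ∑ j ∈ univ.filter (fun j => d i j < D k.succ), y j with hS
      have hSpos : 0 < S := by
        by_contra hc
        push_neg at hc
        have : ((k : ℕ) + 1 : ℝ) * S ≤ 0 := by
          apply mul_nonpos_of_nonneg_of_nonpos _ hc; positivity
        linarith
      have hS1 : 1 ≤ S := by
        obtain ⟨j, hjmem, hjpos⟩ := Finset.exists_lt_of_sum_lt (by simpa using hSpos :
          ∑ j ∈ univ.filter (fun j => d i j < D k.succ), (0:ℝ) < S)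
        rcases hy01 j with h0 | h0
        · simp [h0] at hjpos
        · calc (1:ℝ) = y j := h0.symm
            _ ≤ S := Finset.single_le_sum (f := y) (fun j _ => by
                rcases hy01 j with h | h <;> simp [h]) hjmem
      linarith
end
end

section
/- Formulation (CP2) is a valid formulation of the p-center problem: if r* is the minimum of r over all integer feasible solutions (y, r) of (CP2), then D^{r*} equals the optimal radius opt(d, p). -/
open Finset
open scoped Classical

noncomputable section

/-- `(CP2)` is a valid formulation of the `p`-center problem:
if `r*` minimizes `r` over integer feasible solutions of `(CP2)`, then `D^{r*} = opt(d, p)`. -/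
theorem stmt8 {N M K : ℕ} (hN : 0 < N) (hM : 0 < M)
    (d : Fin N → Fin M → ℝ) (p : ℕ) (hp1 : 1 ≤ p) (hpM : p ≤ M)
    (D : Fin (K + 1) → ℝ) (hD : StrictMono D)
    (hrange : Set.range D = { x : ℝ | ∃ i j, d i j = x })
    (rstar : ℤ) (hfeas : ∃ y, CP2Int d D p y rstar)
    (hmin : ∀ y r, CP2Int d D p y r → rstar ≤ r) :
    ∃ h : rstar.toNat < K + 1, D ⟨rstar.toNat, h⟩ = opt hN d p := by
  obtain ⟨y, hy01, hr0, hrK, hs1, hsp, hcon⟩ := hfeas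
  have hval : ∀ i j, ∃ κ : Fin (K + 1), d i j = D κ := by
    intro i j
    have : d i j ∈ Set.range D := by rw [hrange]; exact ⟨i, j, rfl⟩
    obtain ⟨κ, hκ⟩ := this
    exact ⟨κ, hκ.symm⟩
  have hrt : rstar.toNat < K + 1 := by omega
  refine ⟨hrt, ?_⟩
  set Drt := D ⟨rstar.toNat, hrt⟩ with hDrt
  -- the set whose sInf is opt
  set T : Set ℝ :=
    { r | ∃ S : Finset (Fin M), ∃ hS : S.Nonempty, S.card ≤ p ∧ r = radius hN d S hS } with hT
  have hTne : T.Nonempty := by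
    refine ⟨radius hN d {⟨0, hM⟩} (singleton_nonempty _), {⟨0, hM⟩}, singleton_nonempty _, ?_, rfl⟩
    simpa using hp1
  -- Direction B: Drt is a lower bound of T
  have hlb : ∀ ρ ∈ T, Drt ≤ ρ := by
    rintro ρ ⟨S, hS, hcard, rfl⟩
    obtain ⟨i₀, -, hi₀⟩ := exists_mem_eq_sup' (⟨⟨0, hN⟩, mem_univ _⟩ : (univ : Finset (Fin N)).Nonempty)
      (fun i => S.inf' hS fun j => d i j)
    obtain ⟨j₀, hj₀S, hj₀⟩ := exists_mem_eq_inf' hS (fun j => d i₀ j)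
    obtain ⟨κ₀, hκ₀⟩ := hval i₀ j₀
    have hρ : radius hN d S hS = D κ₀ := by
      rw [radius, hi₀, hj₀, hκ₀]
    -- build a CP2 integer feasible solution with r = κ₀
    set y' : Fin M → ℝ := fun j => if j ∈ S then 1 else 0 with hy'
    have hsum' : ∑ j, y' j = (S.card : ℝ) := by
      simp [hy', Finset.sum_ite_mem]
    have hfeas' : CP2Int d D p y' (κ₀ : ℕ) := by
      refine ⟨fun j => by by_cases h : j ∈ S <;> simp [hy', h],
        by positivity, by exact_mod_cast Nat.le_of_lt_succ κ₀.isLt,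
        by rw [hsum']; exact_mod_cast hS.card_pos,
        by rw [hsum']; exact_mod_cast hcard, ?_⟩
      intro i k hact
      have hnn : (0:ℝ) ≤ ∑ j ∈ univ.filter (fun j => d i j < D k.succ), y' j := by
        apply Finset.sum_nonneg; intro j _; by_cases h : j ∈ S <;> simp [hy', h]
      by_cases hex : ∃ j ∈ S, d i j < D k.succ
      · obtain ⟨j, hjS, hj⟩ := hex
        have hjf : j ∈ univ.filter (fun j => d i j < D k.succ) := by
          simp [Finset.mem_filter, hj]
        have h1 : (1:ℝ) ≤ ∑ j ∈ univ.filter (fun j => d i j < D k.succ), y' j := by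
          have := Finset.single_le_sum
            (f := y') (fun j _ => by by_cases h : j ∈ S <;> simp [hy', h]) hjf
          simpa [hy', hjS] using this
        have hk1 : (0:ℝ) ≤ ((k : ℕ) : ℝ) + 1 := by positivity
        have hκ0 : (0:ℝ) ≤ (((κ₀:ℕ) : ℤ) : ℝ) := by positivity
        nlinarith
      · push_neg at hex
        have hle : D k.succ ≤ D κ₀ := by
          calc D k.succ ≤ S.inf' hS (fun j => d i j) := by
                apply Finset.le_inf'; intro j hj; exact hex j hj
            _ ≤ (univ : Finset (Fin N)).sup'
                (⟨⟨0, hN⟩, mem_univ _⟩) (fun i => S.inf' hS fun j => d i j) :=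
                Finset.le_sup' (fun i => S.inf' hS fun j => d i j) (mem_univ i)
            _ = D κ₀ := by rw [hi₀, hj₀, hκ₀]
        have hkκ : ((k : ℕ) + 1 : ℕ) ≤ (κ₀ : ℕ) := by
          have := hD.le_iff_le.mp hle
          simpa [Fin.le_def] using this
        have : ((k : ℕ) + 1 : ℝ) ≤ ((((κ₀:ℕ)) : ℤ) : ℝ) := by exact_mod_cast hkκ
        have hk1 : (0:ℝ) ≤ ((k : ℕ) : ℝ) + 1 := by positivity
        nlinarith
    have hrκ : rstar ≤ ((κ₀ : ℕ) : ℤ) := hmin y' _ hfeas'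
    have : rstar.toNat ≤ (κ₀ : ℕ) := by omega
    rw [hρ]
    exact hD.monotone (by simpa [Fin.le_def] using this)
  -- Direction A: from (y, rstar), get S with radius ≤ Drt, so Drt ∈ upper part
  set S : Finset (Fin M) := univ.filter (fun j => y j = 1) with hSdef
  have hsum : ∑ j, y j = (S.card : ℝ) := by
    have h1 : ∀ j, y j = if y j = 1 then (1:ℝ) else 0 := by
      intro j; rcases hy01 j with h | h <;> simp [h]
    calc ∑ j, y j = ∑ j, if y j = 1 then (1:ℝ) else 0 := by
          apply Finset.sum_congr rfl; intro j _; exact h1 j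
      _ = (S.card : ℝ) := by rw [Finset.sum_boole]
  have hSne : S.Nonempty := by
    rw [← Finset.card_pos]
    by_contra h
    push_neg at h
    have h0 : S.card = 0 := by omega
    rw [h0] at hsum
    rw [hsum] at hs1
    norm_num at hs1
  have hScard : S.card ≤ p := by
    rw [hsum] at hsp; exact_mod_cast hsp
  have hrad : radius hN d S hSne ≤ Drt := by
    rw [radius]
    apply Finset.sup'_le
    intro i _
    obtain ⟨j₀, hj₀S, hj₀⟩ := exists_mem_eq_inf' hSne (fun j => d i j)
    obtain ⟨κ, hκ⟩ := hval i j₀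
    rw [hj₀, hκ]
    apply hD.monotone
    rw [Fin.le_def]
    show (κ : ℕ) ≤ rstar.toNat
    by_contra hgt
    push_neg at hgt
    -- κ ≥ rstar.toNat + 1 ≥ 1
    have hκ1 : 1 ≤ (κ : ℕ) := by omega
    have hκK : (κ : ℕ) ≤ K := Nat.le_of_lt_succ κ.isLt
    set k : Fin K := ⟨(κ : ℕ) - 1, by omega⟩ with hk
    have hksucc : k.succ = κ := by
      apply Fin.ext; simp [hk, Fin.val_succ]; omega
    have hact : ActiveIdx d D i k := by
      by_cases hKeq : (κ : ℕ) = K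
      · right; simp [hk]; omega
      · left
        constructor
        · simp [hk]; omega
        · exact ⟨j₀, by rw [hksucc, hκ]⟩
    have hzero : ∑ j ∈ univ.filter (fun j => d i j < D k.succ), y j = 0 := by
      apply Finset.sum_eq_zero
      intro j hj
      rw [Finset.mem_filter, hksucc] at hj
      rcases hy01 j with h | h
      · exact h
      · exfalso
        have hjS : j ∈ S := by simp [hSdef, h]
        have : S.inf' hSne (fun j => d i j) ≤ d i j := Finset.inf'_le _ hjS
        rw [hj₀, hκ] at this
        linarith [hj.2]
    have hc := hcon i k hact
    rw [hzero, mul_zero, add_zero] at hc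
    have hkv : ((k : ℕ) : ℝ) + 1 = ((κ : ℕ) : ℝ) := by
      have : (k : ℕ) + 1 = (κ : ℕ) := by simp [hk]; omega
      exact_mod_cast this
    rw [hkv] at hc
    have : ((κ : ℕ) : ℤ) ≤ rstar := by exact_mod_cast hc
    omega
  have hmem : radius hN d S hSne ∈ T := ⟨S, hSne, hScard, rfl⟩
  have hbdd : BddBelow T := ⟨Drt, hlb⟩
  rw [opt]
  apply le_antisymm
  · exact le_csInf hTne hlb
  · exact le_trans (csInf_le hbdd hmem) hrad
end
end

section
/- If (y, z) belongs to the LP-relaxed feasible set F(CP1), then (y, r) with r = Σ_{k=1}^K z^k belongs to the LP-relaxed feasible set F(CP2). -/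
open Finset
open scoped Classical

noncomputable section

lemma z_anti {K : ℕ} {z : Fin K → ℝ} (hz : Ordered z) {a b : Fin K}
    (h : a ≤ b) : z b ≤ z a := by
  obtain ⟨a, ha⟩ := a; obtain ⟨b, hb⟩ := b
  simp only [Fin.mk_le_mk] at h
  induction b with
  | zero => interval_cases a; rfl
  | succ n ih =>
    rcases Nat.lt_or_ge a (n+1) with h' | h'
    · have hn : n < K := Nat.lt_of_succ_lt hb
      exact le_trans (hz ⟨n, hn⟩ hb) (ih hn (Nat.lt_succ_iff.mp h'))
    · have : a = n + 1 := le_antisymm h h'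
      subst this; rfl

/-- if `(y, z) ∈ F(CP1)` then `(y, ∑_{k=1}^K z^k) ∈ F(CP2)`. -/
theorem stmt9 {N M K : ℕ} (hN : 0 < N) (hM : 0 < M)
    (d : Fin N → Fin M → ℝ) (p : ℕ) (hp1 : 1 ≤ p) (hpM : p ≤ M)
    (D : Fin (K + 1) → ℝ) (hD : StrictMono D)
    (hrange : Set.range D = { x : ℝ | ∃ i j, d i j = x })
    (y : Fin M → ℝ) (z : Fin K → ℝ) (hfeas : (y, z) ∈ FCP1 d D p) :
    (y, ∑ k, z k) ∈ FCP2 d D p := by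
  obtain ⟨hy, hz01, hlo, hhi, hord, hcon⟩ := hfeas
  refine ⟨hy, ?_, ?_, hlo, hhi, ?_⟩ <;> simp only [Prod.fst, Prod.snd]
  · exact Finset.sum_nonneg fun k _ => (hz01 k).1
  · calc ∑ k, z k ≤ ∑ _k : Fin K, (1:ℝ) := Finset.sum_le_sum fun k _ => (hz01 k).2
      _ = K := by simp
  · intro i k hk
    set s := ∑ j ∈ univ.filter (fun j => d i j < D k.succ), y j with hs
    have h1 : 1 ≤ z k + s := hcon i k hk
    have h2 : ((k:ℕ)+1 : ℝ) * z k ≤ ∑ m, z m := by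
      have hsub : (Finset.Iic k) ⊆ univ := Finset.subset_univ _
      have : ∑ m ∈ Finset.Iic k, z m ≤ ∑ m, z m :=
        Finset.sum_le_sum_of_subset_of_nonneg hsub fun m _ _ => (hz01 m).1
      refine le_trans ?_ this
      have hcard : (Finset.Iic k).card = (k:ℕ) + 1 := by
        exact Fin.card_Iic k
      calc ((k:ℕ)+1 : ℝ) * z k = (Finset.Iic k).card * z k := by rw [hcard]; push_cast; ring
        _ = ∑ _m ∈ Finset.Iic k, z k := by rw [Finset.sum_const, nsmul_eq_mul]
        _ ≤ ∑ m ∈ Finset.Iic k, z m := Finset.sum_le_sum fun m hm =>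
            z_anti hord (Finset.mem_Iic.mp hm)
    have h3 : ((k:ℕ)+1 : ℝ) * (1 - s) ≤ ((k:ℕ)+1 : ℝ) * z k := by
      apply mul_le_mul_of_nonneg_left (by linarith) (by positivity)
    nlinarith
end
end

section
/- Assume D^k = k for every k ∈ {0, …, K}. Then the LP relaxation bound of (CP1) is at least that of (CP2): v(CP1) ≥ v(CP2), where v(CP1) = inf { D^0 + Σ_{k=1}^K (D^k − D^{k−1}) z^k : (y, z) ∈ F(CP1) } and v(CP2) = inf { r : (y, r) ∈ F(CP2) }. -/
open Finset
open scoped Classical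

noncomputable section

lemma ordered_anti {K : ℕ} {z : Fin K → ℝ} (hz : Ordered z) :
    ∀ n : ℕ, ∀ a b : Fin K, (b : ℕ) = (a : ℕ) + n → z b ≤ z a := by
  intro n
  induction n with
  | zero =>
    intro a b hb
    have : b = a := Fin.ext (by omega)
    simp [this]
  | succ m ih =>
    intro a b hb
    have hc : (a : ℕ) + m < K := by omega
    have h1 : z b ≤ z ⟨(a : ℕ) + m, hc⟩ := by
      have h2 : ((⟨(a : ℕ) + m, hc⟩ : Fin K) : ℕ) + 1 < K := by
        simp only []; omega
      have := hz ⟨(a : ℕ) + m, hc⟩ h2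
      have hb' : b = ⟨((⟨(a : ℕ) + m, hc⟩ : Fin K) : ℕ) + 1, h2⟩ := Fin.ext (by simp; omega)
      rw [hb']; exact this
    exact h1.trans (ih a ⟨(a : ℕ) + m, hc⟩ rfl)

/-- under `D^k = k` for all `k`, the LP bound of `(CP1)` is at least
that of `(CP2)`: `v(CP1) ≥ v(CP2)`. -/
theorem stmt10 {N M K : ℕ} (hN : 0 < N) (hM : 0 < M)
    (d : Fin N → Fin M → ℝ) (p : ℕ) (hp1 : 1 ≤ p) (hpM : p ≤ M)
    (D : Fin (K + 1) → ℝ) (hD : StrictMono D)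
    (hrange : Set.range D = { x : ℝ | ∃ i j, d i j = x })
    (hDk : ∀ k : Fin (K + 1), D k = ((k : ℕ) : ℝ)) :
    sInf { r | ∃ y, (y, r) ∈ FCP2 d D p } ≤
      sInf { v | ∃ yz ∈ FCP1 d D p, v = obj D yz.2 } := by
  have hD0 : D 0 = 0 := by simpa using hDk 0
  have hobj : ∀ z : Fin K → ℝ, obj D z = ∑ k : Fin K, z k := by
    intro z
    unfold obj
    rw [hD0]
    simp only [zero_add]
    apply Finset.sum_congr rfl
    intro k _
    have h1 := hDk k.succ
    have h2 := hDk k.castSucc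
    rw [h1, h2]
    simp [Fin.val_succ]
  -- subset
  have hsub : { v | ∃ yz ∈ FCP1 d D p, v = obj D yz.2 } ⊆
      { r | ∃ y, (y, r) ∈ FCP2 d D p } := by
    rintro v ⟨⟨y, z⟩, ⟨hy, hzb, hs1, hs2, hord, hcon⟩, rfl⟩
    refine ⟨y, hy, ?_, ?_, hs1, hs2, ?_⟩
    · dsimp only
      rw [hobj]
      exact Finset.sum_nonneg fun k _ => (hzb k).1
    · dsimp only
      rw [hobj]
      calc ∑ k : Fin K, z k ≤ ∑ _k : Fin K, (1 : ℝ) :=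
            Finset.sum_le_sum fun k _ => (hzb k).2
        _ = (K : ℝ) := by simp
    · intro i k hk
      have hc := hcon i k hk
      set Y := ∑ j ∈ univ.filter (fun j => d i j < D k.succ), y j with hY
      have hY0 : 0 ≤ Y := Finset.sum_nonneg fun j _ => (hy j).1
      rw [hobj]
      dsimp only
      rcases le_or_gt 1 Y with hY1 | hY1
      · have h0 : (0:ℝ) ≤ ∑ k : Fin K, z k := Finset.sum_nonneg fun k _ => (hzb k).1
        nlinarith
      · -- Y < 1, so z k ≥ 1 - Y > 0, and z l ≥ z k for l ≤ k
        have hzk : 1 - Y ≤ z k := by linarith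
        have hT : ∀ l ∈ univ.filter (fun l : Fin K => (l : ℕ) ≤ (k : ℕ)),
            1 - Y ≤ z l := by
          intro l hl
          rw [Finset.mem_filter] at hl
          have := ordered_anti hord ((k : ℕ) - (l : ℕ)) l k (by omega)
          linarith
        have hcard : (univ.filter (fun l : Fin K => (l : ℕ) ≤ (k : ℕ))).card
            = (k : ℕ) + 1 := by
          have : (univ.filter (fun l : Fin K => (l : ℕ) ≤ (k : ℕ))) = Finset.Iic k := by
            ext l
            simp only [Finset.mem_filter, Finset.mem_univ, true_and, Finset.mem_Iic,
              Fin.le_def]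
          rw [this, Fin.card_Iic]
        have hsum1 : ((k : ℕ) + 1 : ℝ) * (1 - Y) ≤
            ∑ l ∈ univ.filter (fun l : Fin K => (l : ℕ) ≤ (k : ℕ)), z l := by
          calc ((k : ℕ) + 1 : ℝ) * (1 - Y)
              = ∑ _l ∈ univ.filter (fun l : Fin K => (l : ℕ) ≤ (k : ℕ)), (1 - Y) := by
                rw [Finset.sum_const, hcard]
                push_cast
                ring
            _ ≤ _ := Finset.sum_le_sum hT
        have hsum2 : ∑ l ∈ univ.filter (fun l : Fin K => (l : ℕ) ≤ (k : ℕ)), z l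
            ≤ ∑ l : Fin K, z l := by
          apply Finset.sum_le_sum_of_subset_of_nonneg (Finset.filter_subset _ _)
          intro l _ _
          exact (hzb l).1
        nlinarith
  -- nonempty and bddBelow
  have hne : { v | ∃ yz ∈ FCP1 d D p, v = obj D yz.2 }.Nonempty := by
    have hM1 : (1:ℝ) ≤ (M:ℝ) := by exact_mod_cast hM
    have hsum : ∑ _j : Fin M, ((M:ℝ))⁻¹ = 1 := by
      rw [Finset.sum_const]
      simp [Finset.card_univ]
      field_simp
    refine ⟨obj D (fun _ => 1), ⟨((fun _ => ((M:ℝ))⁻¹), fun _ => 1),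
      ⟨?_, ?_, ?_, ?_, ?_, ?_⟩, rfl⟩⟩
    · intro j
      constructor
      · positivity
      · rw [inv_le_one_iff₀]; right; exact hM1
    · intro k; norm_num
    · dsimp only; rw [hsum]
    · dsimp only; rw [hsum]; exact_mod_cast hp1
    · intro k h; exact le_refl _
    · intro i k _
      have : 0 ≤ ∑ j ∈ univ.filter (fun j => d i j < D k.succ), ((M:ℝ))⁻¹ := by
        apply Finset.sum_nonneg
        intro j _
        positivity
      dsimp only
      linarith
  have hbdd : BddBelow { r | ∃ y, (y, r) ∈ FCP2 d D p } := by
    refine ⟨0, ?_⟩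
    rintro r ⟨y, _, hr0, _⟩
    exact hr0
  exact csInf_le_csInf hbdd hne hsub
end
end

section
/- Replacing distances above a valid upper bound does not change the optimal radius: if ub is a real number with opt(d, p) ≤ ub and d′ is defined by d′ i j = ub + 1 when d i j > ub and d′ i j = d i j otherwise, then opt(d′, p) = opt(d, p). -/
open Finset
open scoped Classical

noncomputable section

lemma inf'_mod_eq {N M : ℕ} (d : Fin N → Fin M → ℝ) (ub : ℝ)
    (S : Finset (Fin M)) (hS : S.Nonempty) (i : Fin N)
    (h : (S.inf' hS fun j => d i j) ≤ ub) :
    (S.inf' hS fun j => if ub < d i j then ub + 1 else d i j)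
      = S.inf' hS fun j => d i j := by
  apply le_antisymm
  · obtain ⟨j0, hj0, hv⟩ := S.exists_mem_eq_inf' hS (fun j => d i j)
    have hle : d i j0 ≤ ub := hv ▸ h
    have : (if ub < d i j0 then ub + 1 else d i j0) = d i j0 := if_neg (not_lt.2 hle)
    calc (S.inf' hS fun j => if ub < d i j then ub + 1 else d i j)
        ≤ (if ub < d i j0 then ub + 1 else d i j0) := Finset.inf'_le _ hj0
      _ = d i j0 := this
      _ = _ := hv.symm
  · apply Finset.le_inf'
    intro j hj
    by_cases hc : ub < d i j
    · rw [if_pos hc]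
      linarith
    · rw [if_neg hc]
      exact Finset.inf'_le _ hj

lemma inf'_mod_le_ub {N M : ℕ} (d : Fin N → Fin M → ℝ) (ub : ℝ)
    (S : Finset (Fin M)) (hS : S.Nonempty) (i : Fin N)
    (h : (S.inf' hS fun j => if ub < d i j then ub + 1 else d i j) ≤ ub) :
    (S.inf' hS fun j => d i j) ≤ ub := by
  obtain ⟨j0, hj0, hv⟩ :=
    S.exists_mem_eq_inf' hS (fun j => if ub < d i j then ub + 1 else d i j)
  by_cases hc : ub < d i j0
  · rw [hv, if_pos hc] at h; linarith
  · rw [hv, if_neg hc] at h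
    exact le_trans (Finset.inf'_le _ hj0) h

lemma radius_mod_eq {N M : ℕ} (hN : 0 < N) (d : Fin N → Fin M → ℝ) (ub : ℝ)
    (S : Finset (Fin M)) (hS : S.Nonempty) (h : radius hN d S hS ≤ ub) :
    radius hN (fun i j => if ub < d i j then ub + 1 else d i j) S hS
      = radius hN d S hS := by
  unfold radius at *
  apply Finset.sup'_congr _ rfl
  intro i _
  exact inf'_mod_eq d ub S hS i
    (le_trans (Finset.le_sup' (fun i => S.inf' hS fun j => d i j) (mem_univ i)) h)

lemma radius_mod_le_ub {N M : ℕ} (hN : 0 < N) (d : Fin N → Fin M → ℝ) (ub : ℝ)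
    (S : Finset (Fin M)) (hS : S.Nonempty)
    (h : radius hN (fun i j => if ub < d i j then ub + 1 else d i j) S hS ≤ ub) :
    radius hN d S hS ≤ ub := by
  unfold radius at *
  apply Finset.sup'_le
  intro i _
  refine inf'_mod_le_ub d ub S hS i (le_trans ?_ h)
  exact Finset.le_sup'
    (fun i => S.inf' hS fun j => if ub < d i j then ub + 1 else d i j) (mem_univ i)

lemma optSet_finite {N M : ℕ} (hN : 0 < N) (d : Fin N → Fin M → ℝ) (p : ℕ) :
    Set.Finite { r | ∃ S : Finset (Fin M), ∃ hS : S.Nonempty,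
      S.card ≤ p ∧ r = radius hN d S hS } := by
  apply Set.Finite.subset (Set.finite_range
    (fun S : Finset (Fin M) => if h : S.Nonempty then radius hN d S h else 0))
  rintro r ⟨S, hS, _, rfl⟩
  exact ⟨S, dif_pos hS⟩

lemma optSet_nonempty {N M : ℕ} (hN : 0 < N) (hM : 0 < M)
    (d : Fin N → Fin M → ℝ) (p : ℕ) (hp1 : 1 ≤ p) :
    Set.Nonempty { r | ∃ S : Finset (Fin M), ∃ hS : S.Nonempty,
      S.card ≤ p ∧ r = radius hN d S hS } := by
  refine ⟨radius hN d {⟨0, hM⟩} ⟨⟨0, hM⟩, mem_singleton_self _⟩,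
    {⟨0, hM⟩}, ⟨⟨0, hM⟩, mem_singleton_self _⟩, ?_, rfl⟩
  simpa using hp1

lemma opt_mem {N M : ℕ} (hN : 0 < N) (hM : 0 < M)
    (d : Fin N → Fin M → ℝ) (p : ℕ) (hp1 : 1 ≤ p) :
    opt hN d p ∈ { r | ∃ S : Finset (Fin M), ∃ hS : S.Nonempty,
      S.card ≤ p ∧ r = radius hN d S hS } :=
  (optSet_nonempty hN hM d p hp1).csInf_mem (optSet_finite hN d p)

/-- replacing the distances above a valid upper bound by `ub + 1`
does not change the optimal radius. -/
theorem stmt16 {N M : ℕ} (hN : 0 < N) (hM : 0 < M)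
    (d : Fin N → Fin M → ℝ) (p : ℕ) (hp1 : 1 ≤ p) (hpM : p ≤ M)
    (ub : ℝ) (hub : opt hN d p ≤ ub) :
    opt hN (fun i j => if ub < d i j then ub + 1 else d i j) p = opt hN d p := by
  set d' := fun i j => if ub < d i j then ub + 1 else d i j with hd'
  obtain ⟨S0, hS0, hc0, hr0⟩ := opt_mem hN hM d p hp1
  obtain ⟨S1, hS1, hc1, hr1⟩ := opt_mem hN hM d' p hp1
  have hR0 : radius hN d S0 hS0 ≤ ub := hr0 ▸ hub
  have h0' : radius hN d' S0 hS0 = radius hN d S0 hS0 := radius_mod_eq hN d ub S0 hS0 hR0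
  have hle : opt hN d' p ≤ opt hN d p := by
    rw [hr0, ← h0']
    exact csInf_le (optSet_finite hN d' p).bddBelow ⟨S0, hS0, hc0, rfl⟩
  have hR1' : radius hN d' S1 hS1 ≤ ub := hr1 ▸ le_trans hle hub
  have hR1 : radius hN d S1 hS1 ≤ ub := radius_mod_le_ub hN d ub S1 hS1 hR1'
  have h1' : radius hN d' S1 hS1 = radius hN d S1 hS1 := radius_mod_eq hN d ub S1 hS1 hR1
  have hge : opt hN d p ≤ opt hN d' p := by
    rw [hr1, h1']
    exact csInf_le (optSet_finite hN d p).bddBelow ⟨S1, hS1, hc1, rfl⟩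
  exact le_antisymm hle hge
end
end
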